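/- arXiv:1704.07907 — 4 statements merged into one kernel-verified Lean document; each statement's English description precedes it below -/
import Mathlib

section
/- For every integer r ≥ 2, ((r−1)/(e·r))^{r−1} ≤ f(r,0) ≤ (r−1)!/r^{r−1}. -/
open Finset

namespace ListCol

/-! ### Preference orders and the functions `f(r,θ,m)`, `f(r,θ)`, `β(α)` and `g(r,α)`

A total order `<ᵢ` of `[m]` is encoded by a permutation `σ : Equiv.Perm (Fin m)`,
where `σ k` is the number of elements strictly below `k` in the order; the relative
position of `k` is then `(σ k + 1)/m`. An `(r,m)`-preference order is an `r`-tuple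
of such orders. -/

/-- `x ∈ P`: `x` is the `r`-tuple of relative positions of some element `k ∈ [m]`. -/
def MemPref {r m : ℕ} (P : Fin r → Equiv.Perm (Fin m)) (x : Fin r → ℝ) : Prop :=
  ∃ k : Fin m, ∀ i, x i = (((P i k : ℕ) : ℝ) + 1) / (m : ℝ)

/-- `i` is the least index at which `x : Fin r → ℝ` attains its maximum. -/
def IsMaxIdxR {r : ℕ} (x : Fin r → ℝ) (i : Fin r) : Prop :=
  (∀ j, x j ≤ x i) ∧ ∀ j, (∀ l, x l ≤ x j) → i ≤ j

/-- `f_P(θ) = max { ∏_{i ≠ i_x} x_i : x ∈ [θ,1]^r, x ∈ P }`. -/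
noncomputable def fP {r m : ℕ} (P : Fin r → Equiv.Perm (Fin m)) (θ : ℝ) : ℝ :=
  sSup {y : ℝ | ∃ x : Fin r → ℝ, MemPref P x ∧ (∀ i, θ ≤ x i ∧ x i ≤ 1) ∧
    ∃ i, IsMaxIdxR x i ∧ y = ∏ j ∈ univ.erase i, x j}

/-- `f(r,θ,m) = min { f_P(θ) : P an (r,m)-preference order }`. -/
noncomputable def fMin (r m : ℕ) (θ : ℝ) : ℝ :=
  sInf {y : ℝ | ∃ P : Fin r → Equiv.Perm (Fin m), y = fP P θ}

/-- `f(r,θ) = inf { f(r,θ,m) : m ∈ ℕ, m ≥ 1 }`. -/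
noncomputable def fInf (r : ℕ) (θ : ℝ) : ℝ :=
  sInf {y : ℝ | ∃ m : ℕ, 1 ≤ m ∧ y = fMin r m θ}

/-- `β(α) = sup { θ ∈ [0,1/r] : θ^α ≤ f(r,θ) }`, the unique solution of
`θ^α = f(r,θ)` in `[0,1/r]` (for `0 < α ≤ r-1`). -/
noncomputable def betaVal (r : ℕ) (α : ℝ) : ℝ :=
  sSup {θ : ℝ | θ ∈ Set.Icc 0 (1 / (r : ℝ)) ∧ θ ^ α ≤ fInf r θ}

/-- `g(r,α) = -1 / log_r f(r,β(α))` for `α > 0`, with `g(r,0)` defined as the common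
value of `g(r,α)` on `(0,1]` (namely `g(r,1)`). -/
noncomputable def gFun (r : ℕ) (α : ℝ) : ℝ :=
  -1 / Real.logb r (fInf r (betaVal r (if α = 0 then 1 else α)))

end ListCol

/-! For the lower bound fix an `(r,m)`-preference order and, for each element `k`, let `q k` be
the product of the coordinates of its point other than the maximal one. The product of all
coordinates of all points is `(m!/m^m)^r`; the maximal coordinates, grouped by the index `i`
where they sit, are `sᵢ` distinct values of the `i`-th order, so their product is at most
`∏ᵢ m!/((m-sᵢ)! m^sᵢ)`. Hence `∏ₖ q k ≥ ∏ᵢ (m-sᵢ)! / m^((r-1)m)`, and the multinomial bound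
`(∑ aᵢ)! ≤ r^(∑ aᵢ) ∏ aᵢ!` together with `(n/e)^n ≤ n!` turns this into
`((r-1)/(e r))^((r-1)m)`; the largest `q k` is at least the geometric mean.

For the upper bound take `m = r` and the cyclic order `P i k = i + k`: every point is a
permutation of `(1/r, 2/r, …, 1)`, so its maximal coordinate is `1` and the others multiply to
`(r-1)!/r^(r-1)`. -/

theorem Nat.multinomial_univ_le_card_pow {α : Type*} [Fintype α] (f : α → ℕ) :
    Nat.multinomial univ f ≤ Fintype.card α ^ ∑ i, f i := by
  classical
  have h := sum_pow_eq_sum_piAntidiag (univ : Finset α) (fun _ => (1 : ℕ)) (∑ i, f i)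
  simp only [sum_const, smul_eq_mul, mul_one, one_pow, prod_const_one, Nat.cast_id] at h
  rw [← Finset.card_univ, h]
  exact single_le_sum (f := Nat.multinomial univ) (fun _ _ => Nat.zero_le _)
    (mem_piAntidiag.2 ⟨rfl, fun i _ => mem_univ i⟩)

theorem Nat.factorial_sum_le_card_pow_mul_prod_factorial {α : Type*} [Fintype α] (f : α → ℕ) :
    (∑ i, f i).factorial ≤ Fintype.card α ^ (∑ i, f i) * ∏ i, (f i).factorial := by
  rw [← Nat.multinomial_spec, mul_comm]
  exact Nat.mul_le_mul_right _ (Nat.multinomial_univ_le_card_pow f)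

theorem Real.div_exp_one_pow_le_factorial (n : ℕ) :
    ((n : ℝ) / Real.exp 1) ^ n ≤ n.factorial := by
  rcases n.eq_zero_or_pos with rfl | hn
  · simp
  refine le_trans (le_mul_of_one_le_left (by positivity) ?_) (Stirling.le_factorial_stirling n)
  rw [Real.one_le_sqrt]
  have : (1 : ℝ) ≤ n := by exact_mod_cast hn
  nlinarith [Real.pi_gt_three]

theorem Finset.prod_add_one_le_descFactorial {m : ℕ} {T : Finset ℕ} (hT : T ⊆ range m) :
    ∏ t ∈ T, (t + 1) ≤ m.descFactorial #T := by
  induction m generalizing T with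
  | zero => simp [subset_empty.1 hT]
  | succ m ih =>
    by_cases hm : m ∈ T
    · have hsub : T.erase m ⊆ range m := fun t ht => by
        have := mem_range.1 (hT (mem_of_mem_erase ht))
        exact mem_range.2 (lt_of_le_of_ne (Nat.lt_succ_iff.1 this) (ne_of_mem_erase ht))
      rw [← mul_prod_erase T _ hm, ← card_erase_add_one hm, Nat.succ_descFactorial_succ]
      exact Nat.mul_le_mul_left _ (ih hsub)
    · have hsub : T ⊆ range m := fun t ht => by
        have := mem_range.1 (hT ht)
        exact mem_range.2 (lt_of_le_of_ne (Nat.lt_succ_iff.1 this) (fun h => hm (h ▸ ht)))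
      exact (ih hsub).trans (Nat.descFactorial_le _ m.le_succ)

theorem Equiv.Perm.prod_val_add_one {m : ℕ} (σ : Equiv.Perm (Fin m)) :
    ∏ k, ((σ k : ℕ) + 1) = m.factorial := by
  rw [Equiv.prod_comp σ (fun t : Fin m => (t : ℕ) + 1), Fin.prod_univ_eq_prod_range (· + 1),
    prod_range_add_one_eq_factorial]

theorem Equiv.Perm.prod_val_add_one_le_descFactorial {m : ℕ} (σ : Equiv.Perm (Fin m))
    (F : Finset (Fin m)) : ∏ k ∈ F, ((σ k : ℕ) + 1) ≤ m.descFactorial #F := by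
  have hinj : Set.InjOn (fun k => (σ k : ℕ)) F :=
    fun a _ b _ h => σ.injective (Fin.val_injective h)
  rw [← prod_image (f := (· + 1)) hinj, ← card_image_of_injOn hinj]
  refine prod_add_one_le_descFactorial fun t ht => ?_
  obtain ⟨k, -, rfl⟩ := mem_image.1 ht
  exact mem_range.2 (σ k).isLt

theorem prod_factorial_sub_card_fiber_le_prod_erase {r m : ℕ} (σ : Fin r → Equiv.Perm (Fin m))
    (idx : Fin m → Fin r) :
    ∏ i, (m - #{k | idx k = i}).factorial ≤
      ∏ k, ∏ j ∈ univ.erase (idx k), ((σ j k : ℕ) + 1) := by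
  set s : Fin r → ℕ := fun i => #{k | idx k = i}
  set D := ∏ i, m.descFactorial (s i)
  have hs : ∀ i, s i ≤ m := fun i => (card_le_univ _).trans_eq (Fintype.card_fin m)
  have hcompl : (∏ i, (m - s i).factorial) * D = m.factorial ^ r := by
    rw [← prod_mul_distrib, prod_congr rfl fun i _ => Nat.factorial_mul_descFactorial (hs i),
      prod_const, card_univ, Fintype.card_fin]
  have htotal : (∏ k, ∏ j ∈ univ.erase (idx k), ((σ j k : ℕ) + 1)) *
      ∏ k, ((σ (idx k) k : ℕ) + 1) = m.factorial ^ r := by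
    rw [← prod_mul_distrib, prod_congr rfl fun k _ => prod_erase_mul _ _ (mem_univ (idx k)),
      prod_comm, prod_congr rfl fun j _ => (σ j).prod_val_add_one, prod_const, card_univ,
      Fintype.card_fin]
  have hdiag : ∏ k, ((σ (idx k) k : ℕ) + 1) ≤ D := by
    rw [← prod_fiberwise univ idx]
    refine prod_le_prod' fun i _ => ?_
    rw [prod_congr rfl fun k hk => by rw [(mem_filter.1 hk).2]]
    exact (σ i).prod_val_add_one_le_descFactorial _
  have hD : 0 < D := Nat.pos_of_mul_pos_left (hcompl ▸ pow_pos m.factorial_pos r)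
  refine le_of_mul_le_mul_right ?_ hD
  rw [hcompl, ← htotal]
  exact Nat.mul_le_mul_left _ hdiag

namespace ListCol

open Real

/-- `relPos P k = (rpos_{<₁}(k), …, rpos_{<ᵣ}(k))`. -/
noncomputable def relPos {r m : ℕ} (P : Fin r → Equiv.Perm (Fin m)) (k : Fin m) (i : Fin r) : ℝ :=
  (((P i k : ℕ) : ℝ) + 1) / m

theorem memPref_relPos {r m : ℕ} (P : Fin r → Equiv.Perm (Fin m)) (k : Fin m) :
    MemPref P (relPos P k) :=
  ⟨k, fun _ => rfl⟩

theorem relPos_pos {r m : ℕ} (P : Fin r → Equiv.Perm (Fin m)) (k : Fin m) (i : Fin r) :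
    0 < relPos P k i := by
  have : 0 < m := k.pos
  unfold relPos
  positivity

theorem relPos_le_one {r m : ℕ} (P : Fin r → Equiv.Perm (Fin m)) (k : Fin m) (i : Fin r) :
    relPos P k i ≤ 1 := by
  have hm : (0 : ℝ) < m := by exact_mod_cast k.pos
  rw [relPos, div_le_one hm]
  exact_mod_cast (P i k).isLt

theorem prod_relPos {r m : ℕ} (P : Fin r → Equiv.Perm (Fin m)) (k : Fin m) (s : Finset (Fin r)) :
    ∏ j ∈ s, relPos P k j = ((∏ j ∈ s, ((P j k : ℕ) + 1) : ℕ) : ℝ) / (m : ℝ) ^ #s := by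
  simp only [relPos, prod_div_distrib, prod_const]
  push_cast
  rfl

theorem exists_isMaxIdxR {r : ℕ} [NeZero r] (x : Fin r → ℝ) : ∃ i, IsMaxIdxR x i := by
  obtain ⟨i₀, -, hi₀⟩ := exists_max_image univ x univ_nonempty
  have hne : ({i | ∀ j, x j ≤ x i} : Finset (Fin r)).Nonempty :=
    ⟨i₀, mem_filter.2 ⟨mem_univ _, fun j => hi₀ j (mem_univ j)⟩⟩
  obtain ⟨i, hi, hmin⟩ := exists_min_image _ id hne
  exact ⟨i, (mem_filter.1 hi).2, fun j hj => hmin j (mem_filter.2 ⟨mem_univ _, hj⟩)⟩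

theorem MemPref.exists_eq_relPos {r m : ℕ} {P : Fin r → Equiv.Perm (Fin m)} {x : Fin r → ℝ}
    (hx : MemPref P x) : ∃ k, x = relPos P k :=
  let ⟨k, hk⟩ := hx
  ⟨k, funext hk⟩

theorem prod_erase_le_fP {r m : ℕ} {P : Fin r → Equiv.Perm (Fin m)} {θ : ℝ} {x : Fin r → ℝ}
    (hx : MemPref P x) (hθ : ∀ j, θ ≤ x j) {i : Fin r} (hi : IsMaxIdxR x i) :
    ∏ j ∈ univ.erase i, x j ≤ fP P θ := by
  refine le_csSup ⟨1, ?_⟩ ⟨x, hx, fun j => ⟨hθ j, ?_⟩, i, hi, rfl⟩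
  · rintro _ ⟨y, hy, -, j, -, rfl⟩
    obtain ⟨k, rfl⟩ := hy.exists_eq_relPos
    exact prod_le_one (fun j _ => (relPos_pos P k j).le) (fun j _ => relPos_le_one P k j)
  · obtain ⟨k, rfl⟩ := hx.exists_eq_relPos
    exact relPos_le_one P k j

theorem fP_addLeft_le {r : ℕ} [NeZero r] (θ : ℝ) :
    fP (fun i : Fin r => Equiv.addLeft i) θ ≤ ((r - 1).factorial : ℝ) / (r : ℝ) ^ (r - 1) := by
  set P : Fin r → Equiv.Perm (Fin r) := fun i => Equiv.addLeft i
  have hr : r ≠ 0 := NeZero.ne r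
  refine Real.sSup_le ?_ (by positivity)
  rintro _ ⟨x, hx, -, i, hi, rfl⟩
  obtain ⟨k, rfl⟩ := hx.exists_eq_relPos
  obtain ⟨j, hj⟩ := (Equiv.addRight k).surjective ⟨r - 1, Nat.sub_one_lt hr⟩
  have hj_one : relPos P k j = 1 := by
    have hcast : ((r - 1 : ℕ) : ℝ) + 1 = r := by exact_mod_cast Nat.sub_add_cancel (by omega)
    simp only [relPos, P, Equiv.coe_addLeft]
    rw [show j + k = ⟨r - 1, _⟩ from hj, hcast, div_self (by positivity)]
  have hi_one : relPos P k i = 1 := le_antisymm (relPos_le_one P k i) (hj_one ▸ hi.1 j)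
  have hprod : ∏ j, relPos P k j = (r.factorial : ℝ) / (r : ℝ) ^ r := by
    rw [prod_relPos, card_univ, Fintype.card_fin, ← (Equiv.addRight k).prod_val_add_one]
    rfl
  have hfac : (r.factorial : ℝ) = r * (r - 1).factorial := by
    exact_mod_cast (Nat.mul_factorial_pred hr).symm
  have hpow : (r : ℝ) ^ r = r * (r : ℝ) ^ (r - 1) := by
    rw [← pow_succ', Nat.sub_add_cancel (by omega)]
  rw [← prod_erase_mul univ _ (mem_univ i), hi_one, mul_one] at hprod
  rw [hprod, hfac, hpow, mul_div_mul_left _ _ (by positivity)]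

theorem pow_le_prod_prod_erase_relPos {r m : ℕ} (hr : 1 ≤ r) (hm : 0 < m)
    (P : Fin r → Equiv.Perm (Fin m)) (idx : Fin m → Fin r) :
    (((r : ℝ) - 1) / (exp 1 * r)) ^ ((r - 1) * m) ≤
      ∏ k, ∏ j ∈ univ.erase (idx k), relPos P k j := by
  set n := (r - 1) * m with hn
  set a : Fin r → ℕ := fun i => m - #{k | idx k = i}
  have hsum : ∑ i, a i = n := by
    have hfib : ∑ i, #{k | idx k = i} = m := by
      rw [← card_eq_sum_card_fiberwise (fun k _ => mem_univ (idx k)), card_univ,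
        Fintype.card_fin]
    rw [sum_tsub_distrib _ (fun i _ => (card_le_univ _).trans_eq (Fintype.card_fin m)), hfib,
      sum_const, card_univ, Fintype.card_fin, smul_eq_mul, hn, Nat.sub_one_mul]
  set N := ∏ k, ∏ j ∈ univ.erase (idx k), ((P j k : ℕ) + 1)
  have hN : n.factorial ≤ r ^ n * N := by
    calc n.factorial ≤ r ^ n * ∏ i, (a i).factorial := by
          simpa only [hsum, Fintype.card_fin] using
            Nat.factorial_sum_le_card_pow_mul_prod_factorial a
      _ ≤ r ^ n * N := Nat.mul_le_mul_left _ (prod_factorial_sub_card_fiber_le_prod_erase P idx)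
  have hprod : ∏ k, ∏ j ∈ univ.erase (idx k), relPos P k j = (N : ℝ) / (m : ℝ) ^ n := by
    simp only [prod_relPos, card_erase_of_mem (mem_univ _), card_univ, Fintype.card_fin,
      prod_div_distrib, prod_const, ← pow_mul, N, Nat.cast_prod, hn]
  have hX : ((r : ℝ) - 1) / (exp 1 * r) = ((n : ℝ) / exp 1) / (r * m) := by
    rw [hn]
    push_cast [Nat.cast_sub hr]
    field_simp
  rw [hprod, hX, div_pow]
  calc ((n : ℝ) / exp 1) ^ n / (r * m) ^ n ≤ n.factorial / (r * m) ^ n := by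
        gcongr
        exact Real.div_exp_one_pow_le_factorial n
    _ ≤ ((r ^ n * N : ℕ) : ℝ) / (r * m) ^ n :=
        div_le_div_of_nonneg_right (by exact_mod_cast hN) (by positivity)
    _ = N / m ^ n := by
        push_cast
        rw [mul_pow]
        field_simp

theorem pow_le_fP {r m : ℕ} (hr : 1 ≤ r) (hm : 0 < m) (P : Fin r → Equiv.Perm (Fin m)) :
    (((r : ℝ) - 1) / (exp 1 * r)) ^ (r - 1) ≤ fP P 0 := by
  have : NeZero r := ⟨by omega⟩
  choose idx hidx using fun k : Fin m => exists_isMaxIdxR (relPos P k)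
  set q : Fin m → ℝ := fun k => ∏ j ∈ univ.erase (idx k), relPos P k j
  have hq : ∀ k, 0 ≤ q k := fun k => prod_nonneg fun j _ => (relPos_pos P k j).le
  obtain ⟨k₀, -, hk₀⟩ := exists_max_image univ q ⟨⟨0, hm⟩, mem_univ _⟩
  have hmax : (((r : ℝ) - 1) / (exp 1 * r)) ^ (r - 1) ≤ q k₀ := by
    refine le_of_pow_le_pow_left₀ hm.ne' (hq k₀) ?_
    calc _ = (((r : ℝ) - 1) / (exp 1 * r)) ^ ((r - 1) * m) := (pow_mul _ _ _).symm
      _ ≤ ∏ k, q k := pow_le_prod_prod_erase_relPos hr hm P idx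
      _ ≤ ∏ _k : Fin m, q k₀ := prod_le_prod (fun k _ => hq k) (fun k _ => hk₀ k (mem_univ k))
      _ = q k₀ ^ m := by rw [prod_const, card_univ, Fintype.card_fin]
  exact hmax.trans
    (prod_erase_le_fP (memPref_relPos P k₀) (fun j => (relPos_pos P k₀ j).le) (hidx k₀))

/-- **Theorem.** For every `r ≥ 2`, `((r−1)/(e·r))^{r−1} ≤ f(r,0) ≤ (r−1)!/r^{r−1}`. -/
theorem fInf_zero_bounds (r : ℕ) (hr : 2 ≤ r) :
    (((r : ℝ) - 1) / (Real.exp 1 * (r : ℝ))) ^ (r - 1) ≤ fInf r 0 ∧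
    fInf r 0 ≤ ((r - 1).factorial : ℝ) / (r : ℝ) ^ (r - 1) := by
  have hr1 : 1 ≤ r := by omega
  have : NeZero r := ⟨by omega⟩
  have lower : ∀ m, 1 ≤ m → (((r : ℝ) - 1) / (exp 1 * r)) ^ (r - 1) ≤ fMin r m 0 :=
    fun m hm => le_csInf ⟨_, 1, rfl⟩ (by rintro _ ⟨P, rfl⟩; exact pow_le_fP hr1 hm P)
  refine ⟨le_csInf ⟨_, 1, le_rfl, rfl⟩ (by rintro _ ⟨m, hm, rfl⟩; exact lower m hm), ?_⟩
  calc fInf r 0 ≤ fMin r r 0 :=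
        csInf_le ⟨_, by rintro _ ⟨m, hm, rfl⟩; exact lower m hm⟩ ⟨r, hr1, rfl⟩
    _ ≤ fP (fun i : Fin r => Equiv.addLeft i) 0 :=
        csInf_le ⟨_, by rintro _ ⟨P, rfl⟩; exact pow_le_fP hr1 hr1 P⟩ ⟨_, rfl⟩
    _ ≤ _ := fP_addLeft_le 0

end ListCol
end

section
/- Let ℓ, n ∈ ℕ with ℓ ≥ 3, let ζ ∈ (0,1], and let t = ⌈2ℓ²/ζ⌉. Suppose n·ζ^ℓ ≥ 16t. Then there exists a sequence L_1, …, L_n of ℓ-element subsets of [t] such that for every subset Z ⊆ [t] with |Z| ≥ ζt, writing z = |Z|/t, one has #{i ∈ [n] : L_i ⊆ Z} ≥ n·z^ℓ/4. -/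
/-!
Count over all sequences of `n` sets in `powersetCard ℓ [t]`, i.e. choose the `L_i` independently
and uniformly. For a fixed `Z` with `|Z| = m ≥ 2ℓ²`, a single `L_i` lies in `Z` with probability
`C(m, ℓ) / C(t, ℓ) ≥ (m / t)^ℓ / 2`, by Bernoulli's inequality `(1 - ℓ/m)^ℓ ≥ 1/2`. Weighting a
sequence by `2^(-#{i | L_i ⊆ Z})`, the total weight is at most `C(t, ℓ)^n · exp(-n (m/t)^ℓ / 4)`,
so by Markov's inequality the proportion of sequences with fewer than `c = n (m/t)^ℓ / 4 ≥ 4t`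
indices `i` with `L_i ⊆ Z` is at most `exp(-c (1 - log 2)) ≤ exp(-4t (1 - log 2))`. A union bound
over the at most `2^t` sets `Z` leaves a good sequence, because `5 log 2 < 4`.
-/

open Finset Real

namespace ListCol

lemma pow_le_two_mul_sub_pow {ℓ : ℕ} {x : ℝ} (hx : 2 * (ℓ : ℝ) ^ 2 ≤ x) :
    x ^ ℓ ≤ 2 * (x - ℓ) ^ ℓ := by
  rcases Nat.eq_zero_or_pos ℓ with rfl | hℓ
  · norm_num
  have hℓ1 : (1 : ℝ) ≤ ℓ := by exact_mod_cast hℓ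
  have hx0 : 0 < x := by nlinarith
  have hbern : 1 + ℓ * (-(ℓ / x)) ≤ (1 + -(ℓ / x)) ^ ℓ := by
    refine one_add_mul_le_pow ?_ ℓ
    rw [neg_le_neg_iff, div_le_iff₀ hx0]
    nlinarith
  have hhalf : (1 : ℝ) / 2 ≤ 1 + ℓ * (-(ℓ / x)) := by
    rw [mul_neg, ← mul_div_assoc, ← sq, le_add_neg_iff_add_le, ← le_sub_iff_add_le',
      div_le_iff₀ hx0]
    linarith
  calc x ^ ℓ = 2 * (x ^ ℓ * (1 / 2)) := by ring
    _ ≤ 2 * (x ^ ℓ * (1 + -(ℓ / x)) ^ ℓ) := by gcongr; exact hhalf.trans hbern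
    _ = 2 * (x - ℓ) ^ ℓ := by rw [← mul_pow]; field_simp; ring

lemma choose_mul_div_pow_le_two_mul_choose {ℓ m : ℕ} (t : ℕ) (hm : 2 * (ℓ : ℝ) ^ 2 ≤ m) :
    (t.choose ℓ : ℝ) * (m / t) ^ ℓ ≤ 2 * m.choose ℓ := by
  rcases t.eq_zero_or_pos with rfl | ht
  · cases ℓ <;> simp
  rw [div_pow, ← mul_div_assoc, div_le_iff₀ (by positivity)]
  have hℓm : ℓ ≤ m := by
    have : (ℓ : ℝ) ≤ ℓ ^ 2 := by
      rcases Nat.eq_zero_or_pos ℓ with rfl | hℓ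
      · simp
      · nlinarith [show (1 : ℝ) ≤ ℓ by exact_mod_cast hℓ]
    exact_mod_cast (show (ℓ : ℝ) ≤ m by linarith)
  have htop : (t.descFactorial ℓ : ℝ) ≤ t ^ ℓ := by exact_mod_cast t.descFactorial_le_pow ℓ
  have hbot : ((m : ℝ) - ℓ) ^ ℓ ≤ m.descFactorial ℓ := by
    calc ((m : ℝ) - ℓ) ^ ℓ ≤ ((m + 1 - ℓ : ℕ) : ℝ) ^ ℓ := by
          rw [Nat.cast_sub (by omega)]
          gcongr
          · linarith [show (ℓ : ℝ) ≤ m by exact_mod_cast hℓm]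
          · linarith
      _ ≤ m.descFactorial ℓ := by exact_mod_cast m.pow_sub_le_descFactorial ℓ
  have hfac : (0 : ℝ) < ℓ.factorial := by exact_mod_cast ℓ.factorial_pos
  simp only [Nat.descFactorial_eq_factorial_mul_choose, Nat.cast_mul] at htop hbot
  refine le_of_mul_le_mul_left ?_ hfac
  calc (ℓ.factorial : ℝ) * (t.choose ℓ * m ^ ℓ) ≤ t ^ ℓ * m ^ ℓ := by
        rw [← mul_assoc]; gcongr
    _ ≤ t ^ ℓ * (2 * (m - ℓ) ^ ℓ) := by gcongr; exact pow_le_two_mul_sub_pow hm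
    _ ≤ t ^ ℓ * (2 * (ℓ.factorial * m.choose ℓ)) := by gcongr
    _ = ℓ.factorial * (2 * m.choose ℓ * t ^ ℓ) := by ring

lemma card_piFinset_filter_card_lt_le {α : Type*} (s : Finset α) (p : α → Prop) [DecidablePred p]
    (n : ℕ) {q : ℝ} (hq : q * #s ≤ #{a ∈ s | p a}) (c : ℝ) :
    (#{L ∈ Fintype.piFinset fun _ : Fin n => s | (#{i | p (L i)} : ℝ) < c} : ℝ) ≤
      (#s : ℝ) ^ n * exp (c * log 2 - n * q / 2) := by
  set w : α → ℝ := fun a => if p a then 1 / 2 else 1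
  have hw0 : ∀ a, 0 ≤ w a := fun a => by dsimp only [w]; split_ifs <;> norm_num
  have hsum : ∑ a ∈ s, w a ≤ #s * exp (-(q / 2)) := by
    have hsplit : (#{a ∈ s | p a} : ℝ) + #{a ∈ s | ¬p a} = #s := by
      exact_mod_cast card_filter_add_card_filter_not p
    calc ∑ a ∈ s, w a = #s - #{a ∈ s | p a} / 2 := by
          rw [sum_ite, sum_const, sum_const, nsmul_eq_mul, nsmul_eq_mul]; linarith
      _ ≤ #s * (-(q / 2) + 1) := by linarith
      _ ≤ #s * exp (-(q / 2)) := by gcongr; exact add_one_le_exp _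
  have htotal : ∑ L ∈ Fintype.piFinset (fun _ : Fin n => s), ∏ i, w (L i) ≤
      #s ^ n * exp (-(n * q / 2)) := by
    have : exp (-(n * q / 2)) = exp (-(q / 2)) ^ n := by rw [← exp_nat_mul]; ring_nf
    rw [← sum_pow', this, ← mul_pow]
    exact pow_le_pow_left₀ (sum_nonneg fun a _ => hw0 a) hsum n
  have hbad : ∀ L : Fin n → α, (#{i | p (L i)} : ℝ) < c → exp (-(c * log 2)) ≤ ∏ i, w (L i) := by
    intro L hL
    have : ∏ i, w (L i) = exp (-(#{i | p (L i)} * log 2)) := by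
      simp only [w, prod_ite, prod_const, one_pow, mul_one, one_div, inv_pow, exp_neg,
        exp_nat_mul, exp_log two_pos]
    rw [this]
    gcongr
  set Ω := Fintype.piFinset fun _ : Fin n => s
  set bad := {L ∈ Ω | (#{i | p (L i)} : ℝ) < c}
  have hmarkov : #bad * exp (-(c * log 2)) ≤ #s ^ n * exp (-(n * q / 2)) :=
    calc #bad * exp (-(c * log 2)) ≤ ∑ L ∈ bad, ∏ i, w (L i) := by
          rw [← nsmul_eq_mul]
          exact card_nsmul_le_sum _ _ _ fun L hL => hbad L (mem_filter.mp hL).2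
      _ ≤ ∑ L ∈ Ω, ∏ i, w (L i) :=
          sum_le_sum_of_subset_of_nonneg (filter_subset _ _) fun L _ _ =>
            prod_nonneg fun i _ => hw0 (L i)
      _ ≤ #s ^ n * exp (-(n * q / 2)) := htotal
  rw [sub_eq_add_neg, exp_add, mul_comm (exp _), ← mul_assoc, ← div_le_iff₀ (exp_pos _),
    div_eq_mul_inv, ← exp_neg]
  exact hmarkov

lemma exists_mem_forall_not_of_card_filter_le {β ι : Type*} {Ω : Finset β} {I : Finset ι}
    (P : ι → β → Prop) [∀ i, DecidablePred (P i)] {ε : ℝ} (hΩ : Ω.Nonempty) (hI : #I * ε < 1)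
    (hP : ∀ i ∈ I, (#{x ∈ Ω | P i x} : ℝ) ≤ ε * #Ω) : ∃ x ∈ Ω, ∀ i ∈ I, ¬P i x := by
  classical
  by_contra! hall
  have hcover : Ω ⊆ I.biUnion fun i => {x ∈ Ω | P i x} := fun x hx => by
    obtain ⟨i, hi, hPi⟩ := hall x hx
    exact mem_biUnion.2 ⟨i, hi, mem_filter.2 ⟨hx, hPi⟩⟩
  have hΩ0 : (0 : ℝ) < #Ω := by exact_mod_cast hΩ.card_pos
  have : (#Ω : ℝ) ≤ #I * ε * #Ω :=
    calc (#Ω : ℝ) ≤ ∑ i ∈ I, (#{x ∈ Ω | P i x} : ℝ) := by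
          exact_mod_cast (card_le_card hcover).trans card_biUnion_le
      _ ≤ ∑ _i ∈ I, ε * #Ω := sum_le_sum hP
      _ = #I * ε * #Ω := by rw [sum_const, nsmul_eq_mul, mul_assoc]
  nlinarith

lemma card_piFinset_few_subset_le (ℓ n t : ℕ) (Z : Finset (Fin t)) (hZ : 2 * (ℓ : ℝ) ^ 2 ≤ #Z)
    (hn : 16 * (t : ℝ) ≤ n * (#Z / t : ℝ) ^ ℓ) :
    (#{L ∈ Fintype.piFinset fun _ : Fin n => powersetCard ℓ (univ : Finset (Fin t)) |
        (#{i | L i ⊆ Z} : ℝ) < n * (#Z / t : ℝ) ^ ℓ / 4} : ℝ) ≤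
      exp (-(4 * t * (1 - log 2))) *
        #(Fintype.piFinset fun _ : Fin n => powersetCard ℓ (univ : Finset (Fin t))) := by
  have hinside : {S ∈ powersetCard ℓ (univ : Finset (Fin t)) | S ⊆ Z} = powersetCard ℓ Z := by
    ext S
    simp only [mem_filter, mem_powersetCard, subset_univ, true_and]
    tauto
  have hq : (#Z / t : ℝ) ^ ℓ / 2 * #(powersetCard ℓ (univ : Finset (Fin t))) ≤
      #{S ∈ powersetCard ℓ (univ : Finset (Fin t)) | S ⊆ Z} := by
    rw [hinside, card_powersetCard, card_powersetCard, card_univ, Fintype.card_fin]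
    linarith [choose_mul_div_pow_le_two_mul_choose (t := t) hZ]
  refine (card_piFinset_filter_card_lt_le _ _ n hq _).trans ?_
  rw [Fintype.card_piFinset, prod_const, card_univ, Fintype.card_fin, Nat.cast_pow, mul_comm]
  gcongr
  nlinarith [log_two_lt_d9]

lemma two_pow_mul_exp_lt_one {t : ℕ} (ht : 0 < t) : 2 ^ t * exp (-(4 * t * (1 - log 2))) < 1 := by
  have h2 : (2 : ℝ) ^ t = exp (t * log 2) := by rw [exp_nat_mul, exp_log two_pos]
  rw [h2, ← exp_add, exp_lt_one_iff]
  nlinarith [log_two_lt_d9, (Nat.cast_pos (α := ℝ)).2 ht]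

/-- **Lemma.** Let `ℓ ≥ 3`, `ζ ∈ (0,1]`, `t = ⌈2ℓ²/ζ⌉`, and suppose `n·ζ^ℓ ≥ 16t`.
Then there are `ℓ`-element subsets `L_1, …, L_n` of `[t]` such that every `Z ⊆ [t]`
with `|Z| ≥ ζt` contains at least `n·(|Z|/t)^ℓ/4` of the lists. -/
theorem exists_good_lists (ℓ n : ℕ) (hℓ : 3 ≤ ℓ) (ζ : ℝ) (hζ0 : 0 < ζ) (hζ1 : ζ ≤ 1)
    (t : ℕ) (ht : t = ⌈2 * (ℓ : ℝ) ^ 2 / ζ⌉₊) (hn : 16 * (t : ℝ) ≤ (n : ℝ) * ζ ^ ℓ) :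
    ∃ L : Fin n → Finset (Fin t), (∀ i, (L i).card = ℓ) ∧
      ∀ Z : Finset (Fin t), ζ * (t : ℝ) ≤ (Z.card : ℝ) →
        (n : ℝ) * ((Z.card : ℝ) / (t : ℝ)) ^ ℓ / 4 ≤
          ((Finset.univ.filter fun i => L i ⊆ Z).card : ℝ) := by
  have hℓt : 2 * (ℓ : ℝ) ^ 2 ≤ ζ * t := by
    rw [← div_le_iff₀' hζ0, ht]
    exact Nat.le_ceil _
  have hℓ3 : (3 : ℝ) ≤ ℓ := by exact_mod_cast hℓ
  have ht0 : (0 : ℝ) < t := by nlinarith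
  set lists := Fintype.piFinset fun _ : Fin n => powersetCard ℓ (univ : Finset (Fin t))
  have hlists : lists.Nonempty :=
    Fintype.piFinset_nonempty.2 fun _ => powersetCard_nonempty.2 <| by
      simpa using (show (ℓ : ℝ) ≤ t by nlinarith)
  have hsubsets : (#(univ.filter fun Z : Finset (Fin t) => ζ * t ≤ #Z) : ℝ) ≤ 2 ^ t := by
    exact_mod_cast (card_filter_le _ _).trans (by simp)
  have hfew : ∀ Z ∈ univ.filter fun Z : Finset (Fin t) => ζ * t ≤ #Z,
      (#{L ∈ lists | (#{i | L i ⊆ Z} : ℝ) < n * (#Z / t : ℝ) ^ ℓ / 4} : ℝ) ≤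
        exp (-(4 * t * (1 - log 2))) * #lists := by
    intro Z hZ
    have hζZ : ζ ≤ #Z / t := by rw [le_div_iff₀ ht0]; exact (mem_filter.1 hZ).2
    exact card_piFinset_few_subset_le ℓ n t Z (hℓt.trans (mem_filter.1 hZ).2)
      (hn.trans (by gcongr))
  obtain ⟨L, hL, hgood⟩ := exists_mem_forall_not_of_card_filter_le _ hlists
    ((mul_le_mul_of_nonneg_right hsubsets (exp_pos _).le).trans_lt
      (two_pow_mul_exp_lt_one (by exact_mod_cast ht0))) hfew
  refine ⟨L, fun i => (mem_powersetCard.1 (Fintype.mem_piFinset.1 hL i)).2, fun Z hZ => ?_⟩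
  simpa using hgood Z (by simpa using hZ)

end ListCol
end

section
/- Let r ≥ 1 be an integer, let θ, θ' ∈ [0,1/(r+1)), and let Q be an (r,θ,n)-cover and Q' an (r,θ',n)-cover. If Q and Q' are similar, then |h(Q) − h(Q')| ≤ r·2^r·|θ − θ'|. -/
/-! The similarity is the affine map sending the vertex `θ + (1/(r+1) − θ)·t` to
`θ' + (1/(r+1) − θ')·t`, with `0 < t ≤ r`; it moves that vertex by `(1 − t)(θ' − θ)`, hence by at
most `r·|θ − θ'|`. All vertices lie in `[0,1]`, where a product of factors of absolute value at
most `1` is `1`-Lipschitz in each factor, so the products over corresponding edges differ by at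
most `r·r·|θ − θ'| ≤ r·2^r·|θ − θ'|`, and so do their maxima. -/

open Finset

namespace ListCol

/-! ### Covers and the functions `h(s,θ,n)`, `h(s,θ)` -/

/-- The vertex set `{θ + (1/(s+1) − θ)·j/n : j ∈ [sn]}` of an `(s,θ,n)`-cover. -/
noncomputable def coverVertexSet (s : ℕ) (θ : ℝ) (n : ℕ) : Finset ℝ :=
  (Finset.range (s * n)).image fun j : ℕ => θ + (1 / ((s : ℝ) + 1) - θ) * ((j : ℝ) + 1) / (n : ℝ)

/-- `E` is the edge set of an `(s,θ,n)`-cover: `s`-element pairwise disjoint edges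
whose union is `coverVertexSet s θ n`. -/
def IsCover (s : ℕ) (θ : ℝ) (n : ℕ) (E : Finset (Finset ℝ)) : Prop :=
  (∀ e ∈ E, e.card = s) ∧
  (∀ e ∈ E, ∀ f ∈ E, e ≠ f → Disjoint e f) ∧
  (∀ y : ℝ, (∃ e ∈ E, y ∈ e) ↔ y ∈ coverVertexSet s θ n)

/-- `h(Q) = max over edges e of ∏_{y ∈ e} y`. -/
noncomputable def hEdge (E : Finset (Finset ℝ)) : ℝ :=
  sSup {y : ℝ | ∃ e ∈ E, y = ∏ z ∈ e, z}

/-- `h(s,θ,n) = min { h(Q) : Q an (s,θ,n)-cover }`. -/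
noncomputable def hCovN (s : ℕ) (θ : ℝ) (n : ℕ) : ℝ :=
  sInf {y : ℝ | ∃ E : Finset (Finset ℝ), IsCover s θ n E ∧ y = hEdge E}

/-- `h(s,θ) = inf { h(s,θ,n) : n ≥ 1 }` for `θ < 1/(s+1)`, and
`h(s,1/(s+1)) = (1/(s+1))^s`. -/
noncomputable def hCov (s : ℕ) (θ : ℝ) : ℝ :=
  if θ = 1 / ((s : ℝ) + 1) then (1 / ((s : ℝ) + 1)) ^ s
  else sInf {y : ℝ | ∃ n : ℕ, 1 ≤ n ∧ y = hCovN s θ n}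

lemma abs_prod_sub_prod_le_sum_abs_sub {ι : Type*} (s : Finset ι) {f g : ι → ℝ}
    (hf : ∀ i ∈ s, |f i| ≤ 1) (hg : ∀ i ∈ s, |g i| ≤ 1) :
    |∏ i ∈ s, f i - ∏ i ∈ s, g i| ≤ ∑ i ∈ s, |f i - g i| := by
  induction s using Finset.cons_induction with
  | empty => simp
  | cons a s ha ih =>
    simp only [Finset.mem_cons, forall_eq_or_imp] at hf hg
    have hprod : |∏ i ∈ s, g i| ≤ 1 := by
      rw [Finset.abs_prod]
      exact Finset.prod_le_one (fun _ _ => abs_nonneg _) hg.2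
    rw [Finset.prod_cons, Finset.prod_cons, Finset.sum_cons]
    calc |f a * ∏ i ∈ s, f i - g a * ∏ i ∈ s, g i|
        = |f a * (∏ i ∈ s, f i - ∏ i ∈ s, g i) + (f a - g a) * ∏ i ∈ s, g i| := by ring_nf
      _ ≤ |f a| * |∏ i ∈ s, f i - ∏ i ∈ s, g i| + |f a - g a| * |∏ i ∈ s, g i| := by
        rw [← abs_mul, ← abs_mul]; exact abs_add_le _ _
      _ ≤ 1 * ∑ i ∈ s, |f i - g i| + |f a - g a| * 1 := by
        gcongr
        · exact hf.1
        · exact ih hf.2 hg.2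
      _ = |f a - g a| + ∑ i ∈ s, |f i - g i| := by ring

lemma sSup_image_le_sSup_image_add {α : Type*} (s : Finset α) {f g : α → ℝ} {δ : ℝ}
    (hδ : 0 ≤ δ) (h : ∀ a ∈ s, f a ≤ g a + δ) :
    sSup (f '' s) ≤ sSup (g '' s) + δ := by
  rcases s.eq_empty_or_nonempty with rfl | hs
  · simpa using hδ
  refine csSup_le (hs.to_set.image f) ?_
  rintro _ ⟨a, ha, rfl⟩
  have hbdd : BddAbove (g '' s) := (s.finite_toSet.image g).bddAbove
  linarith [h a ha, le_csSup hbdd (Set.mem_image_of_mem g ha)]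

lemma abs_sSup_image_sub_sSup_image_le {α : Type*} (s : Finset α) {f g : α → ℝ} {δ : ℝ}
    (hδ : 0 ≤ δ) (h : ∀ a ∈ s, |f a - g a| ≤ δ) :
    |sSup (f '' s) - sSup (g '' s)| ≤ δ := by
  rw [abs_sub_le_iff, sub_le_iff_le_add', sub_le_iff_le_add']
  constructor
  · exact sSup_image_le_sSup_image_add s hδ fun a ha => by linarith [abs_sub_le_iff.1 (h a ha)]
  · exact sSup_image_le_sSup_image_add s hδ fun a ha => by linarith [abs_sub_le_iff.1 (h a ha)]

lemma hEdge_image_image {φ : ℝ → ℝ} (hφ : Function.Injective φ) (E : Finset (Finset ℝ)) :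
    hEdge (E.image fun e => e.image φ) = sSup ((fun e => ∏ x ∈ e, φ x) '' E) := by
  rw [hEdge]
  congr 1
  ext y
  simp [eq_comm, Finset.prod_image fun x _ y _ h => hφ h]

lemma hEdge_eq_sSup_image (E : Finset (Finset ℝ)) :
    hEdge E = sSup ((fun e => ∏ x ∈ e, x) '' E) := by
  simpa using hEdge_image_image Function.injective_id E

section Vertices

variable {s n : ℕ} {θ θ' t x : ℝ}

lemma exists_eq_of_mem_coverVertexSet (hx : x ∈ coverVertexSet s θ n) :
    ∃ t : ℝ, 0 < t ∧ t ≤ s ∧ x = θ + (1 / ((s : ℝ) + 1) - θ) * t := by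
  obtain ⟨j, hj, rfl⟩ := Finset.mem_image.1 hx
  have hjn : (j : ℝ) + 1 ≤ s * n := by exact_mod_cast Finset.mem_range.1 hj
  have hn : (0 : ℝ) < n := Nat.cast_pos.2 (Nat.pos_of_ne_zero (by rintro rfl; simp at hj))
  refine ⟨((j : ℝ) + 1) / n, by positivity, (div_le_iff₀ hn).2 hjn, by ring⟩

lemma abs_one_sub_le (ht0 : 0 < t) (hts : t ≤ s) : |1 - t| ≤ s := by
  have hs : (1 : ℝ) ≤ s := Nat.one_le_cast.2 (Nat.cast_pos.1 (ht0.trans_le hts))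
  rw [abs_le]; constructor <;> linarith

lemma coverVertex_mem_Icc (hθ0 : 0 ≤ θ) (hθ1 : θ < 1 / ((s : ℝ) + 1)) (ht0 : 0 ≤ t)
    (hts : t ≤ s) : θ + (1 / ((s : ℝ) + 1) - θ) * t ∈ Set.Icc 0 1 := by
  have hx : θ + (1 / ((s : ℝ) + 1) - θ) * t = θ * (1 - t) + t / (s + 1) := by ring
  have hts' : t / ((s : ℝ) + 1) ≤ s / (s + 1) := by gcongr
  have hsum : 1 / ((s : ℝ) + 1) + s / (s + 1) = 1 := by field_simp; ring
  constructor
  · linarith [mul_nonneg (sub_nonneg.2 hθ1.le) ht0]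
  · rw [hx]
    have : θ * (1 - t) ≤ θ := by nlinarith
    linarith

lemma mem_Icc_of_mem_coverVertexSet (hθ0 : 0 ≤ θ) (hθ1 : θ < 1 / ((s : ℝ) + 1))
    (hx : x ∈ coverVertexSet s θ n) : x ∈ Set.Icc 0 1 := by
  obtain ⟨t, ht0, hts, rfl⟩ := exists_eq_of_mem_coverVertexSet hx
  exact coverVertex_mem_Icc hθ0 hθ1 ht0.le hts

variable (s θ θ') in
noncomputable def coverRescale (x : ℝ) : ℝ :=
  θ' + (1 / ((s : ℝ) + 1) - θ') / (1 / ((s : ℝ) + 1) - θ) * (x - θ)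

lemma coverRescale_coverVertex (hθ : θ ≠ 1 / ((s : ℝ) + 1)) :
    coverRescale s θ θ' (θ + (1 / ((s : ℝ) + 1) - θ) * t) = θ' + (1 / ((s : ℝ) + 1) - θ') * t := by
  have : 1 / ((s : ℝ) + 1) - θ ≠ 0 := sub_ne_zero.2 hθ.symm
  rw [coverRescale, add_sub_cancel_left, ← mul_assoc, div_mul_cancel₀ _ this]

lemma coverRescale_injective (hθ : θ ≠ 1 / ((s : ℝ) + 1)) (hθ' : θ' ≠ 1 / ((s : ℝ) + 1)) :
    Function.Injective (coverRescale s θ θ') := by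
  have hc : (1 / ((s : ℝ) + 1) - θ') / (1 / ((s : ℝ) + 1) - θ) ≠ 0 :=
    div_ne_zero (sub_ne_zero.2 hθ'.symm) (sub_ne_zero.2 hθ.symm)
  intro x y hxy
  exact sub_left_injective (mul_left_cancel₀ hc (add_left_cancel hxy))

lemma coverRescale_mem_Icc (hθ : θ ≠ 1 / ((s : ℝ) + 1)) (hθ'0 : 0 ≤ θ')
    (hθ'1 : θ' < 1 / ((s : ℝ) + 1)) (hx : x ∈ coverVertexSet s θ n) :
    coverRescale s θ θ' x ∈ Set.Icc 0 1 := by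
  obtain ⟨t, ht0, hts, rfl⟩ := exists_eq_of_mem_coverVertexSet hx
  rw [coverRescale_coverVertex hθ]
  exact coverVertex_mem_Icc hθ'0 hθ'1 ht0.le hts

lemma abs_coverRescale_sub_le (hθ : θ ≠ 1 / ((s : ℝ) + 1)) (hx : x ∈ coverVertexSet s θ n) :
    |coverRescale s θ θ' x - x| ≤ s * |θ - θ'| := by
  obtain ⟨t, ht0, hts, rfl⟩ := exists_eq_of_mem_coverVertexSet hx
  rw [coverRescale_coverVertex hθ]
  calc |θ' + (1 / ((s : ℝ) + 1) - θ') * t - (θ + (1 / ((s : ℝ) + 1) - θ) * t)|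
      = |(1 - t) * (θ' - θ)| := by ring_nf
    _ = |1 - t| * |θ - θ'| := by rw [abs_mul, abs_sub_comm θ']
    _ ≤ s * |θ - θ'| := by gcongr; exact abs_one_sub_le ht0 hts

lemma abs_prod_sub_prod_coverRescale_le (hθ0 : 0 ≤ θ) (hθ1 : θ < 1 / ((s : ℝ) + 1))
    (hθ'0 : 0 ≤ θ') (hθ'1 : θ' < 1 / ((s : ℝ) + 1)) {e : Finset ℝ} (he : e.card = s)
    (hsub : ∀ x ∈ e, x ∈ coverVertexSet s θ n) :
    |∏ x ∈ e, x - ∏ x ∈ e, coverRescale s θ θ' x| ≤ s * (s * |θ - θ'|) := by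
  have habs {y : ℝ} (hy : y ∈ Set.Icc (0 : ℝ) 1) : |y| ≤ 1 := abs_le.2 ⟨by linarith [hy.1], hy.2⟩
  calc |∏ x ∈ e, x - ∏ x ∈ e, coverRescale s θ θ' x|
      ≤ ∑ x ∈ e, |x - coverRescale s θ θ' x| :=
        abs_prod_sub_prod_le_sum_abs_sub e
          (fun x hx => habs (mem_Icc_of_mem_coverVertexSet hθ0 hθ1 (hsub x hx)))
          (fun x hx => habs (coverRescale_mem_Icc hθ1.ne hθ'0 hθ'1 (hsub x hx)))
    _ ≤ ∑ _x ∈ e, s * |θ - θ'| := Finset.sum_le_sum fun x hx => by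
        rw [abs_sub_comm]; exact abs_coverRescale_sub_le hθ1.ne (hsub x hx)
    _ = s * (s * |θ - θ'|) := by rw [Finset.sum_const, he, nsmul_eq_mul]

end Vertices

theorem similar_covers_general (r n : ℕ) (θ θ' : ℝ)
    (hθ0 : 0 ≤ θ) (hθ1 : θ < 1 / ((r : ℝ) + 1))
    (hθ'0 : 0 ≤ θ') (hθ'1 : θ' < 1 / ((r : ℝ) + 1))
    (E E' : Finset (Finset ℝ)) (hE : IsCover r θ n E)
    (hsim : E' = E.image fun e =>
      e.image fun x => θ' + (1 / ((r : ℝ) + 1) - θ') / (1 / ((r : ℝ) + 1) - θ) * (x - θ)) :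
    |hEdge E - hEdge E'| ≤ (r : ℝ) * 2 ^ r * |θ - θ'| := by
  have hE'_image : E' = E.image fun e => e.image (coverRescale r θ θ') := hsim
  have hedge : ∀ e ∈ E, |∏ x ∈ e, x - ∏ x ∈ e, coverRescale r θ θ' x| ≤ r * 2 ^ r * |θ - θ'| :=
    fun e he => by
      refine (abs_prod_sub_prod_coverRescale_le hθ0 hθ1 hθ'0 hθ'1 (hE.1 e he)
        fun x hx => (hE.2.2 x).1 ⟨e, he, hx⟩).trans ?_
      rw [← mul_assoc]
      gcongr
      exact_mod_cast Nat.lt_two_pow_self.le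
  rw [hE'_image, hEdge_image_image (coverRescale_injective hθ1.ne hθ'1.ne), hEdge_eq_sSup_image]
  exact abs_sSup_image_sub_sSup_image_le E (by positivity) hedge

/-- **Lemma.** If `Q` is an `(r,θ,n)`-cover and `Q'` an `(r,θ',n)`-cover and they are
similar (the order-preserving affine bijection between the vertex sets maps edges to
edges), then `|h(Q) − h(Q')| ≤ r·2^r·|θ − θ'|`. -/
theorem similar_covers (r n : ℕ) (hr : 1 ≤ r) (hn : 1 ≤ n) (θ θ' : ℝ)
    (hθ0 : 0 ≤ θ) (hθ1 : θ < 1 / ((r : ℝ) + 1))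
    (hθ'0 : 0 ≤ θ') (hθ'1 : θ' < 1 / ((r : ℝ) + 1))
    (E E' : Finset (Finset ℝ)) (hE : IsCover r θ n E) (hE' : IsCover r θ' n E')
    (hsim : E' = E.image fun e =>
      e.image fun x => θ' + (1 / ((r : ℝ) + 1) - θ') / (1 / ((r : ℝ) + 1) - θ) * (x - θ)) :
    |hEdge E - hEdge E'| ≤ (r : ℝ) * 2 ^ r * |θ - θ'| :=
  similar_covers_general r n θ θ' hθ0 hθ1 hθ'0 hθ'1 E E' hE hsim

end ListCol
end

section
/- Let r ≥ 2 be an integer, θ ∈ [0,1/r) and n ∈ ℕ. Then for every m ∈ ℕ with m − r⌈θm⌉ + r = n, one has f(r,θ,rm) ≤ h(r−1,θ,n) + (r−1)·2^{r−1}/m. -/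
open Finset

namespace ListCol

/-!
Write `r = s + 1`, split `[r m]` into `r` blocks of `m` elements and fix a cover `E`. Keep the
`n - d` edges avoiding the `d = n - m` smallest vertices and attach the `u`-th kept edge to the
index `u` of every block. In the `j`-th order block `j` comes last, and an element of block `i`
with kept edge `u` is placed, for `i - j = l + 1`, by the index of the `l`-th vertex of its edge;
the leftover indices of block `i` come first in the order `j = i - s`, where they fall below `θ`.
The orders are only specified by such keys: any linear extension does, and counting the elements
of smaller key bounds every position. Hence a point of `[θ,1]^r` in `P` has its maximum in its own
block, and its other `s` coordinates are at most the vertices of its edge plus `s / m`; a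
telescoping product estimate gives `f(r,θ,rm) ≤ h(E) + s² / m`.
-/

section LinearExtension

variable {α β : Type*} [Fintype α] [LinearOrder β] {N : ℕ}

theorem exists_equiv_fin_strictMono_key (key : α → β) (hN : Fintype.card α = N) :
    ∃ f : α ≃ Fin N, ∀ a b, key a < key b → f a < f b := by
  subst hN
  let e := Fintype.equivFin α
  -- break ties of `key` by an arbitrary enumeration of `α`
  let key' : α → β ×ₗ Fin (Fintype.card α) := fun a => toLex (key a, e a)
  have key'_inj : Function.Injective key' := fun a b h => e.injective (congrArg (·.2) h)
  let rank : α → ℕ := fun a => #{b | key' b < key' a}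
  have rank_lt_rank : ∀ a b, key' a < key' b → rank a < rank b := fun a b hab =>
    card_lt_card <| (ssubset_iff_of_subset fun c hc =>
      mem_filter.2 ⟨mem_univ c, (mem_filter.1 hc).2.trans hab⟩).2
        ⟨a, mem_filter.2 ⟨mem_univ a, hab⟩, fun ha => lt_irrefl _ (mem_filter.1 ha).2⟩
  have rank_lt_card : ∀ a, rank a < Fintype.card α := fun a =>
    card_lt_card (filter_ssubset.2 ⟨a, mem_univ a, lt_irrefl _⟩)
  have rank_inj : Function.Injective fun a => (⟨rank a, rank_lt_card a⟩ : Fin _) := by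
    intro a b hab
    have hab : rank a = rank b := congrArg Fin.val hab
    rcases lt_trichotomy (key' a) (key' b) with h | h | h
    · exact absurd hab (rank_lt_rank a b h).ne
    · exact key'_inj h
    · exact absurd hab (rank_lt_rank b a h).ne'
  refine ⟨Equiv.ofBijective _ ((Fintype.bijective_iff_injective_and_card _).2
    ⟨rank_inj, (Fintype.card_fin _).symm⟩), fun a b hab => ?_⟩
  exact rank_lt_rank a b (Prod.Lex.toLex_lt_toLex.2 (Or.inl hab))

variable {key : α → β} {f : α ≃ Fin N}

theorem card_key_lt_le (hf : ∀ a b, key a < key b → f a < f b) (a : α) :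
    #{b | key b < key a} ≤ f a :=
  calc #{b | key b < key a} ≤ #(Iio (f a)) :=
        card_le_card_of_injOn f (fun b hb => mem_Iio.2 (hf b a (mem_filter.1 hb).2))
          f.injective.injOn
    _ = f a := Fin.card_Iio _

theorem lt_card_key_le (hf : ∀ a b, key a < key b → f a < f b) (a : α) :
    (f a : ℕ) < #{b | key b ≤ key a} :=
  calc (f a : ℕ) < #(Iic (f a)) := by rw [Fin.card_Iic]; exact Nat.lt_succ_self _
    _ ≤ #{b | key b ≤ key a} :=
        card_le_card_of_injOn f.symm (fun c hc => mem_filter.2 ⟨mem_univ _, not_lt.1 fun h =>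
          (mem_Iic.1 hc).not_gt (by simpa using hf a (f.symm c) h)⟩) f.symm.injective.injOn

end LinearExtension

theorem exists_injective_rows {α : Type*} [DecidableEq α] {E : Finset (Finset α)} {s K : ℕ}
    (hcard : ∀ e ∈ E, #e = s) (hdisj : (E : Set (Finset α)).PairwiseDisjoint id)
    (hK : K ≤ #E) :
    ∃ W : Fin K → Fin s → α, Function.Injective (Function.uncurry W) ∧
      ∀ u, univ.image (W u) ∈ E := by
  obtain ⟨row⟩ := Function.Embedding.nonempty_of_card_le (α := Fin K) (β := E) (by simpa using hK)
  let enum : ∀ u, Fin s ≃ (row u : Finset α) :=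
    fun u => ((row u : Finset α).equivFinOfCardEq (hcard _ (row u).2)).symm
  refine ⟨fun u l => enum u l, ?_, fun u => ?_⟩
  · rintro ⟨u, l⟩ ⟨u', l'⟩ h
    replace h : (enum u l : α) = enum u' l' := h
    have hrow : row u = row u' := by
      by_contra hne
      exact disjoint_left.1 (hdisj (row u).2 (row u').2 fun h => hne (Subtype.ext h))
        (enum u l).2 (h ▸ (enum u' l').2)
    obtain rfl := row.injective hrow
    simp [(enum u).injective (Subtype.ext h)]
  · convert (row u).2
    ext z
    simp only [mem_image, mem_univ, true_and]
    exact ⟨fun ⟨l, hl⟩ => hl ▸ (enum u l).2, fun hz => ⟨(enum u).symm ⟨z, hz⟩, by simp⟩⟩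

theorem prod_le_prod_add_card_mul {ι : Type*} (F : Finset ι) {x w : ι → ℝ} {c : ℝ}
    (hc : 0 ≤ c) (hx : ∀ i ∈ F, 0 ≤ x i ∧ x i ≤ 1) (hw : ∀ i ∈ F, 0 ≤ w i ∧ w i ≤ 1)
    (hxw : ∀ i ∈ F, x i ≤ w i + c) :
    ∏ i ∈ F, x i ≤ ∏ i ∈ F, w i + #F * c := by
  induction F using Finset.cons_induction with
  | empty => simp
  | cons a F ha ih =>
    simp only [forall_mem_cons] at hx hw hxw
    have ih := ih hx.2 hw.2 hxw.2
    have hw0 : 0 ≤ ∏ i ∈ F, w i := prod_nonneg fun i hi => (hw.2 i hi).1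
    have hw1 : ∏ i ∈ F, w i ≤ 1 := prod_le_one (fun i hi => (hw.2 i hi).1) fun i hi => (hw.2 i hi).2
    rw [prod_cons, prod_cons, card_cons, Nat.cast_succ]
    calc x a * ∏ i ∈ F, x i ≤ x a * (∏ i ∈ F, w i + #F * c) :=
          mul_le_mul_of_nonneg_left ih hx.1.1
      _ ≤ (w a + c) * ∏ i ∈ F, w i + #F * c := by
          nlinarith [mul_le_mul_of_nonneg_right hxw.1 hw0, hx.1.2,
            mul_nonneg (Nat.cast_nonneg #F) hc]
      _ ≤ w a * ∏ i ∈ F, w i + (#F + 1) * c := by nlinarith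

theorem prod_erase_eq_prod_sub_succ {M : Type*} [CommMonoid M] {s : ℕ} (i : Fin (s + 1))
    (x : Fin (s + 1) → M) : ∏ j ∈ univ.erase i, x j = ∏ l : Fin s, x (i - l.succ) := by
  refine (prod_nbij (fun l : Fin s => i - l.succ) (fun l _ => ?_) (fun l _ l' _ h => ?_)
    (fun j hj => ?_) fun _ _ => rfl).symm
  · simp [Fin.succ_ne_zero]
  · simpa using h
  · obtain ⟨l, hl⟩ := Fin.exists_succ_eq.2 (sub_ne_zero.2 (ne_of_mem_erase hj).symm)
    exact ⟨l, mem_coe.2 (mem_univ l), show i - l.succ = j by rw [hl, sub_sub_cancel]⟩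

section Construction

variable {s m K N d : ℕ} (w : Fin K → Fin s → ℕ)

/-- The sorting key of the element `(i, u)` (block `i`, index `u`) in the `j`-th order;
`N` exceeds every vertex index `w u l`. -/
def prefKey (N : ℕ) (j : Fin (s + 1)) (b : Fin (s + 1) × Fin m) : ℕ :=
  if hc : b.1 - j = 0 then N + 2
  else if hu : (b.2 : ℕ) < K then w ⟨b.2, hu⟩ ((b.1 - j).pred hc) + 1
  else if b.1 - j = Fin.last s then 0
  else N + 1

variable {w}

theorem prefKey_self (j : Fin (s + 1)) (u : Fin m) : prefKey w N j (j, u) = N + 2 := by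
  simp [prefKey]

theorem prefKey_lt (hwN : ∀ u l, w u l < N) {j : Fin (s + 1)} {b : Fin (s + 1) × Fin m}
    (hb : b.1 ≠ j) : prefKey w N j b < N + 2 := by
  unfold prefKey
  split_ifs with hc hu
  · exact absurd (sub_eq_zero.1 hc) hb
  · linarith [hwN ⟨b.2, hu⟩ ((b.1 - j).pred hc)]
  all_goals omega

theorem prefKey_of_sub_eq_succ {j : Fin (s + 1)} {b : Fin (s + 1) × Fin m} {l : Fin s}
    (hl : b.1 - j = l.succ) (hu : (b.2 : ℕ) < K) :
    prefKey w N j b = w ⟨b.2, hu⟩ l + 1 := by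
  simp [prefKey, hl, hu, Fin.succ_ne_zero]

theorem prefKey_eq_zero {j : Fin (s + 1)} {b : Fin (s + 1) × Fin m}
    (h : prefKey w N j b = 0) : b.1 - j = Fin.last s ∧ K ≤ b.2 := by
  unfold prefKey at h
  split_ifs at h with hc hu hl
  exact ⟨hl, not_lt.1 hu⟩

theorem prefKey_of_pos_of_le {j : Fin (s + 1)} {b : Fin (s + 1) × Fin m}
    (h0 : 0 < prefKey w N j b) (hN : prefKey w N j b ≤ N) :
    ∃ l : Fin s, ∃ hu : (b.2 : ℕ) < K, b.1 - j = l.succ ∧ prefKey w N j b = w ⟨b.2, hu⟩ l + 1 := by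
  unfold prefKey at h0 hN ⊢
  split_ifs at h0 hN ⊢ with hc hu
  · omega
  · exact ⟨_, hu, (Fin.succ_pred _ hc).symm, rfl⟩
  all_goals omega

theorem prefKey_of_sub_eq_last (hs : 0 < s) {j : Fin (s + 1)} {b : Fin (s + 1) × Fin m}
    (hl : b.1 - j = Fin.last s) (hu : K ≤ (b.2 : ℕ)) : prefKey w N j b = 0 := by
  simp [prefKey, hl, not_lt.2 hu, hs.ne']

theorem card_fst_ne (j : Fin (s + 1)) : #{b : Fin (s + 1) × Fin m | b.1 ≠ j} = s * m := by
  rw [show ({b | b.1 ≠ j} : Finset (Fin (s + 1) × Fin m)) = (univ.erase j) ×ˢ univ by ext; simp]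
  simp

theorem card_prefKey_eq_zero_le (j : Fin (s + 1)) :
    #{b : Fin (s + 1) × Fin m | prefKey w N j b = 0} ≤ m - K :=
  calc #{b : Fin (s + 1) × Fin m | prefKey w N j b = 0} ≤ #(Ico K m) := by
        refine card_le_card_of_injOn (fun b => (b.2 : ℕ)) (fun b hb => ?_) fun b hb b' hb' h => ?_
        · exact mem_Ico.2 ⟨(prefKey_eq_zero (mem_filter.1 hb).2).2, b.2.2⟩
        · have hl := (prefKey_eq_zero (mem_filter.1 hb).2).1
          have hl' := (prefKey_eq_zero (mem_filter.1 hb').2).1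
          exact Prod.ext (sub_left_inj.1 (hl.trans hl'.symm)) (Fin.ext h)
    _ = m - K := Nat.card_Ico K m

theorem card_prefKey_pos_le (hw : Function.Injective (Function.uncurry w))
    (hdw : ∀ u l, d ≤ w u l) (j : Fin (s + 1)) {p : ℕ} (hp : p < N) :
    #{b : Fin (s + 1) × Fin m | 0 < prefKey w N j b ∧ prefKey w N j b ≤ p + 1} ≤ p + 1 - d :=
  calc #{b : Fin (s + 1) × Fin m | 0 < prefKey w N j b ∧ prefKey w N j b ≤ p + 1}
        ≤ #(Icc (d + 1) (p + 1)) := by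
        refine card_le_card_of_injOn (prefKey w N j) (fun b hb => ?_) fun b hb b' hb' h => ?_
        · obtain ⟨h0, hle⟩ := (mem_filter.1 hb).2
          obtain ⟨l, hu, -, hkey⟩ := prefKey_of_pos_of_le h0 (by omega)
          exact mem_Icc.2 ⟨hkey ▸ Nat.succ_le_succ (hdw _ _), hle⟩
        · obtain ⟨h0, hle⟩ := (mem_filter.1 hb).2
          obtain ⟨h0', hle'⟩ := (mem_filter.1 hb').2
          obtain ⟨l, hu, hl, hkey⟩ := prefKey_of_pos_of_le h0 (by omega)
          obtain ⟨l', hu', hl', hkey'⟩ := prefKey_of_pos_of_le h0' (by omega)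
          have hwl : Function.uncurry w (⟨b.2, hu⟩, l) = Function.uncurry w (⟨b'.2, hu'⟩, l') :=
            Nat.succ_injective (hkey.symm.trans (h.trans hkey'))
          have hwl := hw hwl
          simp only [Prod.mk.injEq, Fin.mk.injEq] at hwl
          obtain ⟨hu2, rfl⟩ := hwl
          exact Prod.ext (sub_left_inj.1 (hl.trans hl'.symm)) (Fin.ext hu2)
    _ = p + 1 - d := by simp

variable {j : Fin (s + 1)} {f : Fin (s + 1) × Fin m ≃ Fin ((s + 1) * m)}

theorem le_position_self (hwN : ∀ u l, w u l < N)
    (hf : ∀ a b, prefKey w N j a < prefKey w N j b → f a < f b) (u : Fin m) :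
    s * m ≤ f (j, u) :=
  calc s * m = #{b : Fin (s + 1) × Fin m | b.1 ≠ j} := (card_fst_ne j).symm
    _ ≤ #{b | prefKey w N j b < prefKey w N j (j, u)} := by
        refine card_le_card fun b hb => mem_filter.2 ⟨mem_univ b, ?_⟩
        rw [prefKey_self]
        exact prefKey_lt hwN (mem_filter.1 hb).2
    _ ≤ f (j, u) := card_key_lt_le hf _

theorem position_lt_of_ne (hwN : ∀ u l, w u l < N)
    (hf : ∀ a b, prefKey w N j a < prefKey w N j b → f a < f b) {i : Fin (s + 1)} (hij : i ≠ j)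
    (u : Fin m) : f (i, u) < s * m :=
  calc (f (i, u) : ℕ) < #{b | prefKey w N j b ≤ prefKey w N j (i, u)} := lt_card_key_le hf _
    _ ≤ #{b : Fin (s + 1) × Fin m | b.1 ≠ j} := by
        refine card_le_card fun b hb => mem_filter.2 ⟨mem_univ b, fun hbj => ?_⟩
        have hb := (mem_filter.1 hb).2
        have := prefKey_lt hwN (b := (i, u)) hij
        rw [show b = (j, b.2) from Prod.ext hbj rfl, prefKey_self] at hb
        omega
    _ = s * m := card_fst_ne j

theorem position_add_le_of_sub_eq_succ (hw : Function.Injective (Function.uncurry w))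
    (hdw : ∀ u l, d ≤ w u l) (hwN : ∀ u l, w u l < N)
    (hf : ∀ a b, prefKey w N j a < prefKey w N j b → f a < f b) {i : Fin (s + 1)} {l : Fin s}
    (hl : i - j = l.succ) {u : Fin m} (hu : (u : ℕ) < K) : f (i, u) + d ≤ m - K + w ⟨u, hu⟩ l := by
  have hkey : prefKey w N j (i, u) = w ⟨u, hu⟩ l + 1 := prefKey_of_sub_eq_succ hl hu
  have hsplit := calc (f (i, u) : ℕ) < #{b | prefKey w N j b ≤ prefKey w N j (i, u)} :=
        lt_card_key_le hf _
    _ = #(({b | prefKey w N j b = 0} : Finset (Fin (s + 1) × Fin m)) ∪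
          ({b | 0 < prefKey w N j b ∧ prefKey w N j b ≤ w ⟨u, hu⟩ l + 1} : Finset _)) := by
        rw [← filter_or, hkey]
        congr! 2
        omega
    _ ≤ m - K + (w ⟨u, hu⟩ l + 1 - d) :=
        (card_union_le _ _).trans (add_le_add (card_prefKey_eq_zero_le j)
          (card_prefKey_pos_le hw hdw j (hwN _ _)))
  have := hdw ⟨u, hu⟩ l
  omega

theorem position_lt_of_sub_eq_last (hs : 0 < s)
    (hf : ∀ a b, prefKey w N j a < prefKey w N j b → f a < f b) {i : Fin (s + 1)}
    (hl : i - j = Fin.last s) {u : Fin m} (hu : K ≤ (u : ℕ)) : f (i, u) < m - K :=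
  calc (f (i, u) : ℕ) < #{b | prefKey w N j b ≤ prefKey w N j (i, u)} := lt_card_key_le hf _
    _ = #{b : Fin (s + 1) × Fin m | prefKey w N j b = 0} := by
        rw [prefKey_of_sub_eq_last hs (b := (i, u)) hl hu]
        simp
    _ ≤ m - K := card_prefKey_eq_zero_le j

variable (w) in
theorem exists_prefOrder_of_rows (hs : 0 < s) (hw : Function.Injective (Function.uncurry w))
    (hdw : ∀ u l, d ≤ w u l) :
    ∃ P : Fin (s + 1) → Equiv.Perm (Fin ((s + 1) * m)), ∀ k, ∃ i,
      (∀ j ≠ i, (P j k : ℕ) < P i k) ∧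
      ((∃ u, ∀ l, (P (i - l.succ) k : ℕ) + d ≤ m - K + w u l) ∨ ∃ j, (P j k : ℕ) < m - K) := by
  obtain ⟨N, hwN⟩ : ∃ N, ∀ u l, w u l < N := ⟨univ.sup (Function.uncurry w) + 1,
    fun u l => Nat.lt_succ_of_le (le_sup (f := Function.uncurry w) (mem_univ (u, l)))⟩
  choose f hf using fun j : Fin (s + 1) => exists_equiv_fin_strictMono_key (prefKey w N j)
    (by simp : Fintype.card (Fin (s + 1) × Fin m) = (s + 1) * m)
  refine ⟨fun j => finProdFinEquiv.symm.trans (f j), fun k => ?_⟩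
  obtain ⟨⟨i, u⟩, rfl⟩ := finProdFinEquiv.surjective k
  simp only [Equiv.trans_apply, Equiv.symm_apply_apply]
  refine ⟨i, fun j hj =>
    (position_lt_of_ne hwN (hf j) hj.symm u).trans_le (le_position_self hwN (hf i) u), ?_⟩
  by_cases hu : (u : ℕ) < K
  · exact Or.inl ⟨⟨u, hu⟩, fun l =>
      position_add_le_of_sub_eq_succ hw hdw hwN (hf _) (sub_sub_cancel i l.succ) hu⟩
  · exact Or.inr ⟨i - Fin.last s,
      position_lt_of_sub_eq_last hs (hf _) (sub_sub_cancel _ _) (not_lt.1 hu)⟩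

end Construction

section Cover

variable {s n : ℕ} {θ : ℝ}

/-- Indexed from `0`: `coverVertex s θ n p` is the vertex `j = p + 1` of the paper. -/
noncomputable def coverVertex (s : ℕ) (θ : ℝ) (n p : ℕ) : ℝ :=
  θ + (1 / ((s : ℝ) + 1) - θ) * ((p : ℝ) + 1) / (n : ℝ)

theorem coverVertex_strictMono (hθ : θ < 1 / ((s : ℝ) + 1)) (hn : 0 < n) :
    StrictMono (coverVertex s θ n) := fun p q hpq => by
  unfold coverVertex
  have : (p : ℝ) < q := by exact_mod_cast hpq
  have : 0 < 1 / ((s : ℝ) + 1) - θ := by linarith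
  gcongr

theorem mem_coverVertexSet {z : ℝ} :
    z ∈ coverVertexSet s θ n ↔ ∃ p < s * n, coverVertex s θ n p = z := by
  simp [coverVertexSet, coverVertex]

theorem card_coverVertexSet (hθ : θ < 1 / ((s : ℝ) + 1)) (hn : 0 < n) :
    #(coverVertexSet s θ n) = s * n := by
  rw [show coverVertexSet s θ n = (range (s * n)).image (coverVertex s θ n) from rfl,
    card_image_of_injective _ (coverVertex_strictMono hθ hn).injective,
    card_range]

theorem coverVertex_nonneg (h0 : 0 ≤ θ) (hθ : θ < 1 / ((s : ℝ) + 1)) (p : ℕ) :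
    0 ≤ coverVertex s θ n p := by
  unfold coverVertex
  have : 0 ≤ 1 / ((s : ℝ) + 1) - θ := by linarith
  positivity

theorem coverVertex_le_one (h0 : 0 ≤ θ) (hθ : θ < 1 / ((s : ℝ) + 1)) {p : ℕ} (hp : p < s * n) :
    coverVertex s θ n p ≤ 1 := by
  have hs : (1 : ℝ) ≤ s := by exact_mod_cast Nat.pos_of_mul_pos_right (p.zero_le.trans_lt hp)
  have hn : (0 : ℝ) < n := by exact_mod_cast Nat.pos_of_mul_pos_left (p.zero_le.trans_lt hp)
  have hpn : ((p : ℝ) + 1) / n ≤ s := by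
    rw [div_le_iff₀ hn]
    exact_mod_cast hp
  have hslope : 0 ≤ 1 / ((s : ℝ) + 1) - θ := by linarith
  calc coverVertex s θ n p = θ + (1 / ((s : ℝ) + 1) - θ) * (((p : ℝ) + 1) / n) := by
        rw [coverVertex, mul_div_assoc]
    _ ≤ θ + (1 / ((s : ℝ) + 1) - θ) * s := by gcongr
    _ = s / (s + 1) - θ * (s - 1) := by field_simp; ring
    _ ≤ 1 := by
        have : (s : ℝ) / (s + 1) ≤ 1 := (div_le_one (by positivity)).2 (by linarith)
        nlinarith [mul_nonneg h0 (sub_nonneg.2 hs)]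

theorem prod_le_hEdge {E : Finset (Finset ℝ)} {e : Finset ℝ} (he : e ∈ E) :
    ∏ z ∈ e, z ≤ hEdge E :=
  le_csSup ((E.image fun e => ∏ z ∈ e, z).bddAbove.mono fun _ ⟨_, he', hy⟩ =>
    hy ▸ mem_coe.2 (mem_image_of_mem _ he')) ⟨e, he, rfl⟩

theorem IsCover.hEdge_nonneg {E : Finset (Finset ℝ)} (hE : IsCover s θ n E) (h0 : 0 ≤ θ)
    (hθ : θ < 1 / ((s : ℝ) + 1)) : 0 ≤ hEdge E :=
  Real.sSup_nonneg fun _ ⟨e, he, hy⟩ => hy ▸ prod_nonneg fun z hz => by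
    obtain ⟨p, -, rfl⟩ := mem_coverVertexSet.1 ((hE.2.2 z).1 ⟨e, he, hz⟩)
    exact coverVertex_nonneg h0 hθ p

theorem exists_isCover (hθ : θ < 1 / ((s : ℝ) + 1)) (hn : 0 < n) : ∃ E, IsCover s θ n E := by
  let W : Fin n → Fin s → ℝ := fun b l => coverVertex s θ n (finProdFinEquiv (b, l))
  have hW : Function.Injective (Function.uncurry W) :=
    (coverVertex_strictMono hθ hn).injective.comp (Fin.val_injective.comp finProdFinEquiv.injective)
  have hWrow : ∀ b, Function.Injective (W b) := fun b l l' h =>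
    (Prod.ext_iff.1 (@hW (b, l) (b, l') h)).2
  refine ⟨univ.image fun b => univ.image (W b), ?_, ?_, fun y => ?_⟩
  · intro e he
    obtain ⟨b, -, rfl⟩ := mem_image.1 he
    rw [card_image_of_injective _ (hWrow b), card_univ, Fintype.card_fin]
  · intro e he e' he' hne
    obtain ⟨b, -, rfl⟩ := mem_image.1 he
    obtain ⟨b', -, rfl⟩ := mem_image.1 he'
    refine disjoint_left.2 fun z hz hz' => hne ?_
    obtain ⟨l, -, rfl⟩ := mem_image.1 hz
    obtain ⟨l', -, hl'⟩ := mem_image.1 hz'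
    have hbb : b = b' := (Prod.ext_iff.1 (@hW (b, l) (b', l') hl'.symm)).1
    rw [hbb]
  · simp only [mem_image, mem_univ, true_and, exists_exists_eq_and, mem_coverVertexSet]
    constructor
    · rintro ⟨b, l, rfl⟩
      exact ⟨_, (mul_comm n s ▸ (finProdFinEquiv (b, l)).2), rfl⟩
    · rintro ⟨p, hp, rfl⟩
      obtain ⟨⟨b, l⟩, hbl⟩ := finProdFinEquiv.surjective (⟨p, mul_comm s n ▸ hp⟩ : Fin (n * s))
      exact ⟨b, l, by simp only [W, hbl]⟩

theorem IsCover.exists_rows {E : Finset (Finset ℝ)} (hE : IsCover s θ n E) (hs : 0 < s)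
    (hn : 0 < n) (hθ : θ < 1 / ((s : ℝ) + 1)) (d : ℕ) :
    ∃ w : Fin (n - d) → Fin s → ℕ, Function.Injective (Function.uncurry w) ∧
      (∀ u l, d ≤ w u l ∧ w u l < s * n) ∧
      ∀ u, ∃ e ∈ E, ∏ l, coverVertex s θ n (w u l) = ∏ z ∈ e, z := by
  obtain ⟨hcard, hdisj, hunion⟩ := hE
  set v := coverVertex s θ n
  have hnE : n ≤ #E := by
    refine Nat.le_of_mul_le_mul_left ?_ hs
    calc s * n = #(coverVertexSet s θ n) := (card_coverVertexSet hθ hn).symm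
      _ ≤ #(E.biUnion id) := card_le_card fun z hz => mem_biUnion.2 ((hunion z).2 hz)
      _ ≤ ∑ e ∈ E, #e := card_biUnion_le
      _ = s * #E := by rw [sum_congr rfl hcard, sum_const, smul_eq_mul, mul_comm]
  -- each of the `d` smallest vertices lies in only one edge
  have hbad : #{e ∈ E | ∃ q < d, v q ∈ e} ≤ d :=
    calc #{e ∈ E | ∃ q < d, v q ∈ e} ≤ #((range d).biUnion fun q => {e ∈ E | v q ∈ e}) :=
          card_le_card fun e he => by
            obtain ⟨he, q, hq, hqe⟩ := mem_filter.1 he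
            exact mem_biUnion.2 ⟨q, mem_range.2 hq, mem_filter.2 ⟨he, hqe⟩⟩
      _ ≤ ∑ q ∈ range d, #{e ∈ E | v q ∈ e} := card_biUnion_le
      _ ≤ ∑ _q ∈ range d, 1 := sum_le_sum fun q _ => card_le_one.2 fun e he e' he' => by
          by_contra hne
          exact disjoint_left.1 (hdisj _ (mem_filter.1 he).1 _ (mem_filter.1 he').1 hne)
            (mem_filter.1 he).2 (mem_filter.1 he').2
      _ = d := by simp
  have hgood : n - d ≤ #{e ∈ E | ¬∃ q < d, v q ∈ e} := by
    have := card_filter_add_card_filter_not (s := E) (fun e => ∃ q < d, v q ∈ e)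
    omega
  obtain ⟨W, hW, hWE⟩ := exists_injective_rows (fun e he => hcard e (mem_filter.1 he).1)
    (fun e he e' he' hne => hdisj e (mem_filter.1 he).1 e' (mem_filter.1 he').1 hne) hgood
  have hWv : ∀ u l, ∃ p, (d ≤ p ∧ p < s * n) ∧ v p = W u l := by
    intro u l
    have hrow := mem_filter.1 (hWE u)
    have hWl : W u l ∈ univ.image (W u) := mem_image_of_mem _ (mem_univ l)
    obtain ⟨p, hp, hpv⟩ := mem_coverVertexSet.1 ((hunion _).1 ⟨_, hrow.1, hWl⟩)
    refine ⟨p, ⟨not_lt.1 fun hpd => hrow.2 ⟨p, hpd, ?_⟩, hp⟩, hpv⟩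
    rwa [show v p = W u l from hpv]
  choose w hw hvw using hWv
  refine ⟨w, fun a b hab => hW ?_, hw, fun u => ⟨_, (mem_filter.1 (hWE u)).1, ?_⟩⟩
  · simp only [Function.uncurry, ← hvw, show w a.1 a.2 = w b.1 b.2 from hab]
  · rw [prod_image (g := W u) fun l _ l' _ h => (Prod.ext_iff.1 (@hW (u, l) (u, l') h)).2]
    exact prod_congr rfl fun l _ => hvw u l

end Cover

section PrefOrder

variable {r m : ℕ} {θ : ℝ}

theorem fP_nonneg (P : Fin r → Equiv.Perm (Fin m)) (h0 : 0 ≤ θ) : 0 ≤ fP P θ :=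
  Real.sSup_nonneg fun _ ⟨_, _, hbox, _, _, hy⟩ => hy ▸ prod_nonneg fun j _ => h0.trans (hbox j).1

theorem fMin_le_fP (P : Fin r → Equiv.Perm (Fin m)) (h0 : 0 ≤ θ) : fMin r m θ ≤ fP P θ :=
  csInf_le ⟨0, fun _ ⟨Q, hQ⟩ => hQ ▸ fP_nonneg Q h0⟩ ⟨P, rfl⟩

theorem IsMaxIdxR.eq_of_forall_lt {x : Fin r → ℝ} {i i' : Fin r} (h : IsMaxIdxR x i')
    (hx : ∀ j ≠ i, x j < x i) : i' = i := by
  by_contra hne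
  exact (hx i' hne).not_ge (h.1 i)

theorem fP_le {P : Fin r → Equiv.Perm (Fin m)} {B : ℝ} (hB : 0 ≤ B)
    (h : ∀ x, MemPref P x → (∀ i, θ ≤ x i ∧ x i ≤ 1) → ∀ i, IsMaxIdxR x i →
      ∏ j ∈ univ.erase i, x j ≤ B) : fP P θ ≤ B :=
  Real.sSup_le (fun _ ⟨x, hx, hbox, i, hi, hy⟩ => hy ▸ h x hx hbox i hi) hB

end PrefOrder

theorem div_le_coverVertex_add {s n m p q : ℕ} {θ t : ℝ} (hm : 0 < m) (hn : 0 < n)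
    (ht : t ≤ θ * m) (ht' : θ * m ≤ t + 1) (hnm : (n : ℝ) = m - (s + 1) * t) (hp : p < s * n)
    (hq : (q : ℝ) ≤ (s + 1) * t + p) :
    ((q : ℝ) + 1) / ((s + 1) * m) ≤ coverVertex s θ n p + s / m := by
  have hm : (0 : ℝ) < m := by exact_mod_cast hm
  have hn : (0 : ℝ) < n := by exact_mod_cast hn
  have hp : (p : ℝ) + 1 ≤ s * n := by exact_mod_cast hp
  unfold coverVertex
  rw [div_le_iff₀ (by positivity)]
  field_simp
  nlinarith [mul_le_mul_of_nonneg_left ht' (by positivity : (0 : ℝ) ≤ p + 1),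
    mul_le_mul_of_nonneg_left ht (by positivity : (0 : ℝ) ≤ (p + 1) * (s + 1))]

theorem fMin_le_hEdge_add {s n m : ℕ} {θ : ℝ} (hs : 0 < s) (hn : 0 < n) (hm : 0 < m)
    (h0 : 0 ≤ θ) (hθ : θ < 1 / ((s : ℝ) + 1))
    (hrel : (m : ℤ) - (s + 1) * ⌈θ * m⌉ + (s + 1) = n) {E : Finset (Finset ℝ)}
    (hE : IsCover s θ n E) : fMin (s + 1) ((s + 1) * m) θ ≤ hEdge E + s * s / m := by
  -- `n - d` edges are kept, `d = n - m`; the `g = m - n` leftover indices of a block fall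
  -- below `θ` in one order, as `g - d = (s + 1) * (⌈θ m⌉ - 1)`
  obtain ⟨w, hw, hwn, hwE⟩ := hE.exists_rows hs hn hθ (n - m)
  obtain ⟨P, hP⟩ := exists_prefOrder_of_rows (m := m) w hs hw fun u l => (hwn u l).1
  simp only [show m - (n - (n - m)) = m - n by omega] at hP
  set t : ℝ := ⌈θ * m⌉ - 1 with ht
  have ht₁ : t < θ * m := by linarith [Int.ceil_lt_add_one (θ * m)]
  have ht₂ : θ * m ≤ t + 1 := by linarith [Int.le_ceil (θ * m)]
  have hnm : (n : ℝ) = m - (s + 1) * t := by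
    have := congrArg (Int.cast : ℤ → ℝ) hrel
    push_cast at this
    linarith
  have hgd : ((m - n : ℕ) : ℝ) - (n - m : ℕ) = (s + 1) * t := by
    have := congrArg (Int.cast : ℤ → ℝ) (show ((m - n : ℕ) : ℤ) - (n - m : ℕ) = m - n by omega)
    push_cast at this
    linarith
  have hsm : ((s + 1) * m : ℕ) = ((s : ℝ) + 1) * m := by push_cast; ring
  refine (fMin_le_fP P h0).trans (fP_le (by positivity [hE.hEdge_nonneg h0 hθ]) ?_)
  rintro x ⟨k, hk⟩ hbox i' hi'
  obtain ⟨i, htop, hcase⟩ := hP k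
  simp only [hsm] at hk
  obtain rfl := hi'.eq_of_forall_lt fun j hj => by
    rw [hk, hk]
    gcongr
    exact_mod_cast htop j hj
  rcases hcase with ⟨u, hu⟩ | ⟨j, hj⟩
  · obtain ⟨e, he, hprod⟩ := hwE u
    have hcoord : ∀ l : Fin s, x (i' - l.succ) ≤ coverVertex s θ n (w u l) + s / m := fun l => by
      have : ((P (i' - l.succ) k : ℕ) : ℝ) + (n - m : ℕ) ≤ (m - n : ℕ) + w u l := by
        exact_mod_cast hu l
      exact (hk _).trans_le (div_le_coverVertex_add hm hn ht₁.le ht₂ hnm (hwn u l).2 (by linarith))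
    calc ∏ j ∈ univ.erase i', x j = ∏ l : Fin s, x (i' - l.succ) := prod_erase_eq_prod_sub_succ i' x
      _ ≤ ∏ l, coverVertex s θ n (w u l) + s * (s / m) := by
          simpa using prod_le_prod_add_card_mul univ (by positivity)
            (fun l _ => ⟨h0.trans (hbox _).1, (hbox _).2⟩)
            (fun l _ => ⟨coverVertex_nonneg h0 hθ _, coverVertex_le_one h0 hθ (hwn u l).2⟩)
            fun l _ => hcoord l
      _ ≤ hEdge E + s * s / m := by
          rw [hprod, ← mul_div_assoc]
          linarith [prod_le_hEdge he]
  · rw [show n - m = 0 by omega, Nat.cast_zero, sub_zero] at hgd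
    have hP1 : ((P j k : ℕ) : ℝ) + 1 ≤ (m - n : ℕ) := by exact_mod_cast hj
    have := (hbox j).1
    rw [hk, le_div_iff₀ (by positivity)] at this
    nlinarith

/-- **Lemma.** For `r ≥ 2`, `θ ∈ [0,1/r)` and `n ≥ 1`: for every `m ≥ 1` with
`m − r⌈θm⌉ + r = n`, one has `f(r,θ,rm) ≤ h(r−1,θ,n) + (r−1)·2^{r−1}/m`. -/
theorem fMin_le_hCovN (r n : ℕ) (hr : 2 ≤ r) (hn : 1 ≤ n) (θ : ℝ)
    (h0 : 0 ≤ θ) (h1 : θ < 1 / (r : ℝ)) :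
    ∀ m : ℕ, 1 ≤ m → (m : ℤ) - r * ⌈θ * (m : ℝ)⌉ + r = (n : ℤ) →
      fMin r (r * m) θ ≤ hCovN (r - 1) θ n + ((r : ℝ) - 1) * 2 ^ (r - 1) / (m : ℝ) := by
  intro m hm hrel
  obtain ⟨s, rfl⟩ : ∃ s, r = s + 1 := ⟨r - 1, by omega⟩
  have hs : 0 < s := by omega
  push_cast at h1 hrel ⊢
  simp only [add_sub_cancel_right]
  obtain ⟨E₀, hE₀⟩ := exists_isCover h1 hn
  have hcov : fMin (s + 1) ((s + 1) * m) θ - s * s / m ≤ hCovN s θ n :=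
    le_csInf ⟨_, E₀, hE₀, rfl⟩ fun _ ⟨E, hE, hy⟩ =>
      hy ▸ sub_le_iff_le_add.2 (fMin_le_hEdge_add hs hn hm h0 h1 hrel hE)
  have herr : (s : ℝ) * s / m ≤ s * 2 ^ s / m := by
    gcongr
    exact_mod_cast s.lt_two_pow_self.le
  linarith

end ListCol
end
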